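/- Let μ be a locally determined positive measure, F : Ω → X locally Pettis integrable, and g, h : Ω → ℝ measurable with g = h ν_F-almost everywhere. Then gF = hF weakly μ-almost everywhere, i.e., ⟨gF, x*⟩ = ⟨hF, x*⟩ μ-a.e. for every x* ∈ X*. Moreover, if g_n → g ν_F-a.e., then ⟨g_n F, x*⟩ → ⟨gF, x*⟩ μ-a.e. for every x* ∈ X*. -/

import Mathlib

open MeasureTheory ENNReal
open scoped ENNReal

noncomputable section

variable {Ω : Type*} [MeasurableSpace Ω]
variable {X : Type*} [NormedAddCommGroup X] [NormedSpace ℝ X] [CompleteSpace X]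

/-- `F` is weakly `μ`-measurable. -/
def WeaklyMeasurable (μ : Measure Ω) (F : Ω → X) : Prop :=
  ∀ x' : StrongDual ℝ X, AEStronglyMeasurable (fun t => x' (F t)) μ

/-- `F` is Dunford integrable. -/
def DunfordIntegrable (μ : Measure Ω) (F : Ω → X) : Prop :=
  WeaklyMeasurable μ F ∧ ∀ x' : StrongDual ℝ X, Integrable (fun t => x' (F t)) μ

/-- The Dunford norm `sup_{‖x*‖ ≤ 1} ∫ |⟨F, x*⟩| dμ` (in `ℝ≥0∞`). -/
def dunfordNorm (μ : Measure Ω) (F : Ω → X) : ℝ≥0∞ :=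
  ⨆ (x' : StrongDual ℝ X) (_ : ‖x'‖ ≤ 1), ∫⁻ t, ENNReal.ofReal |x' (F t)| ∂μ

/-- `x` is the Pettis integral of `F` over `A`. -/
def IsPettisIntegralOn (μ : Measure Ω) (F : Ω → X) (A : Set Ω) (x : X) : Prop :=
  ∀ x' : StrongDual ℝ X, x' x = ∫ t in A, x' (F t) ∂μ

/-- `F` is Pettis integrable. -/
def PettisIntegrable (μ : Measure Ω) (F : Ω → X) : Prop :=
  DunfordIntegrable μ F ∧ ∀ A : Set Ω, MeasurableSet A → ∃ x : X, IsPettisIntegralOn μ F A x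

-- The Pettis integral of `F` over `A` (junk value `0` if it does not exist).
open Classical in
def pettisIntegral (μ : Measure Ω) (F : Ω → X) (A : Set Ω) : X :=
  if h : ∃ x : X, IsPettisIntegralOn μ F A x then h.choose else 0

/-- The δ-ring `Σ^f` of measurable sets of finite measure. -/
def finiteMeasureSets (μ : Measure Ω) : Set (Set Ω) :=
  {B | MeasurableSet B ∧ μ B < ∞}

/-- `F` is locally Pettis integrable. -/
def LocPettisIntegrable (μ : Measure Ω) (F : Ω → X) : Prop :=
  WeaklyMeasurable μ F ∧ ∀ B ∈ finiteMeasureSets μ, PettisIntegrable μ (B.indicator F)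

/-- `F` is locally Bochner integrable. -/
def LocBochnerIntegrable (μ : Measure Ω) (F : Ω → X) : Prop :=
  AEStronglyMeasurable F μ ∧ ∀ B ∈ finiteMeasureSets μ, Integrable (B.indicator F) μ

/-- The variation of a scalar set function `lam` defined on a δ-ring `R`,
evaluated at `A`: the supremum of `Σ_j |lam A_j|` over finite disjoint families
of members of `R` contained in `A`. -/
def scalarVariation (R : Set (Set Ω)) (lam : Set Ω → ℝ) (A : Set Ω) : ℝ≥0∞ :=
  ⨆ (P : Finset (Set Ω)) (_ : ∀ B ∈ P, B ∈ R ∧ B ⊆ A)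
    (_ : (P : Set (Set Ω)).PairwiseDisjoint id), ∑ B ∈ P, ENNReal.ofReal |lam B|

/-- The variation of a vector set function `ν` defined on a δ-ring `R`. -/
def vectorVariation (R : Set (Set Ω)) (ν : Set Ω → X) (A : Set Ω) : ℝ≥0∞ :=
  ⨆ (P : Finset (Set Ω)) (_ : ∀ B ∈ P, B ∈ R ∧ B ⊆ A)
    (_ : (P : Set (Set Ω)).PairwiseDisjoint id), ∑ B ∈ P, ENNReal.ofReal ‖ν B‖

/-- The semivariation of a vector set function `ν` defined on a δ-ring `R`. -/
def semivariation (R : Set (Set Ω)) (ν : Set Ω → X) (A : Set Ω) : ℝ≥0∞ :=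
  ⨆ (x' : StrongDual ℝ X) (_ : ‖x'‖ ≤ 1),
    scalarVariation R (fun B => x' (ν B)) A

/-- `μ` is semi-finite. -/
def SemiFinite (μ : Measure Ω) : Prop :=
  ∀ A : Set Ω, MeasurableSet A → 0 < μ A →
    ∃ B ⊆ A, MeasurableSet B ∧ 0 < μ B ∧ μ B < ∞

/-- `μ` is locally determined: it is semi-finite and a set is measurable as soon as
its intersection with every finite-measure set is measurable. -/
def LocallyDetermined (μ : Measure Ω) : Prop :=
  SemiFinite μ ∧ ∀ A : Set Ω,
    (∀ B ∈ finiteMeasureSets μ, MeasurableSet (A ∩ B)) → MeasurableSet A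

/-! The semivariation dominates `‖ν_F(B)‖`, so a `ν_F`-null set `N` has `ν_F(B) = 0` for every
finite-measure `B ⊆ N`: each `⟨F, x*⟩` has vanishing integrals over all finite-measure subsets
of `N`. On a semi-finite measure this forces `⟨F, x*⟩ = 0` a.e. on `N`, so there `gF`, `hF`,
`g_n F` are all weakly zero, while off `N` the hypotheses on `g`, `h`, `g_n` hold pointwise. -/

namespace SemiFinite

variable {μ : Measure Ω}

theorem restrict (hμ : SemiFinite μ) {N : Set Ω} (hN : MeasurableSet N) :
    SemiFinite (μ.restrict N) := by
  intro A hA hpos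
  rw [Measure.restrict_apply hA] at hpos
  obtain ⟨B, hBA, hB, hBpos, hBfin⟩ := hμ (A ∩ N) (hA.inter hN) hpos
  have hBN : μ.restrict N B = μ B := by
    rw [Measure.restrict_apply hB, Set.inter_eq_left.2 (hBA.trans Set.inter_subset_right)]
  exact ⟨B, hBA.trans Set.inter_subset_left, hB, hBN ▸ hBpos, hBN ▸ hBfin⟩

theorem measure_eq_zero_of_forall_finite (hμ : SemiFinite μ) {A : Set Ω} (hA : MeasurableSet A)
    (h : ∀ B ⊆ A, MeasurableSet B → μ B < ∞ → μ B = 0) : μ A = 0 := by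
  by_contra hA0
  obtain ⟨B, hBA, hB, hBpos, hBfin⟩ := hμ A hA (pos_iff_ne_zero.2 hA0)
  exact hBpos.ne' (h B hBA hB hBfin)

theorem ae_eq_zero_of_forall_setIntegral_eq_zero {E : Type*} [NormedAddCommGroup E]
    [NormedSpace ℝ E] [CompleteSpace E] (hμ : SemiFinite μ) {f : Ω → E}
    (hf : AEStronglyMeasurable f μ)
    (hf_int_finite : ∀ s, MeasurableSet s → μ s < ∞ → IntegrableOn f s μ)
    (hf_zero : ∀ s, MeasurableSet s → μ s < ∞ → ∫ t in s, f t ∂μ = 0) : f =ᵐ[μ] 0 := by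
  set f' := hf.mk f
  have hf' : f =ᵐ[μ] f' := hf.ae_eq_mk
  have hsupp : μ (Function.support f') = 0 := by
    refine hμ.measure_eq_zero_of_forall_finite hf.stronglyMeasurable_mk.measurableSet_support
      fun B hBS hB hBfin => ?_
    have hfB : f =ᵐ[μ.restrict B] f' := ae_restrict_of_ae hf'
    have hf0 : f' =ᵐ[μ.restrict B] 0 := hfB.symm.trans
      (ae_eq_zero_restrict_of_forall_setIntegral_eq_zero hf_int_finite hf_zero hB hBfin.ne)
    rw [measure_eq_zero_iff_ae_notMem]
    filter_upwards [(ae_restrict_iff' hB).1 hf0] with t ht htB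
    exact hBS htB (ht htB)
  exact hf'.trans (ae_iff.2 (by simpa only [Function.support, Pi.zero_apply] using hsupp))

end SemiFinite

theorem ofReal_abs_le_scalarVariation {α : Type*} {R : Set (Set α)} (lam : Set α → ℝ)
    {A B : Set α} (hB : B ∈ R) (hBA : B ⊆ A) :
    ENNReal.ofReal |lam B| ≤ scalarVariation R lam A := by
  have hsingle : ∑ C ∈ ({B} : Finset (Set α)), ENNReal.ofReal |lam C| = ENNReal.ofReal |lam B| :=
    Finset.sum_singleton _ _
  refine hsingle ▸ le_iSup₂_of_le {B} (fun C hC => ?_) (le_iSup_of_le ?_ le_rfl)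
  · rw [Finset.mem_singleton.1 hC]
    exact ⟨hB, hBA⟩
  · simp

theorem ofReal_norm_le_semivariation {α E : Type*} [NormedAddCommGroup E] [NormedSpace ℝ E]
    {R : Set (Set α)} (ν : Set α → E) {A B : Set α} (hB : B ∈ R) (hBA : B ⊆ A) :
    ENNReal.ofReal ‖ν B‖ ≤ semivariation R ν A := by
  obtain ⟨x', hx'1, hx'⟩ := exists_dual_vector'' ℝ (ν B)
  calc ENNReal.ofReal ‖ν B‖ = ENNReal.ofReal |x' (ν B)| := by rw [hx']; simp
    _ ≤ scalarVariation R (fun C => x' (ν C)) A := ofReal_abs_le_scalarVariation _ hB hBA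
    _ ≤ semivariation R ν A := le_iSup₂_of_le x' hx'1 le_rfl

theorem eq_zero_of_semivariation_eq_zero {α E : Type*} [NormedAddCommGroup E] [NormedSpace ℝ E]
    {R : Set (Set α)} {ν : Set α → E} {A B : Set α} (h0 : semivariation R ν A = 0)
    (hB : B ∈ R) (hBA : B ⊆ A) : ν B = 0 := by
  have h := ofReal_norm_le_semivariation ν hB hBA
  rw [h0, nonpos_iff_eq_zero, ENNReal.ofReal_eq_zero] at h
  exact norm_le_zero_iff.1 h

section Pettis

variable {E : Type*} [NormedAddCommGroup E] [NormedSpace ℝ E] {μ : Measure Ω} {F : Ω → E}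

theorem IsPettisIntegralOn.apply_pettisIntegral {A : Set Ω} {x : E}
    (h : IsPettisIntegralOn μ F A x) (x' : StrongDual ℝ E) :
    x' (pettisIntegral μ F A) = ∫ t in A, x' (F t) ∂μ := by
  rw [pettisIntegral, dif_pos ⟨x, h⟩]
  exact (⟨x, h⟩ : ∃ x, IsPettisIntegralOn μ F A x).choose_spec x'

namespace LocPettisIntegrable

variable {B : Set Ω}

theorem integrableOn (hF : LocPettisIntegrable μ F) (hB : B ∈ finiteMeasureSets μ)
    (x' : StrongDual ℝ E) : IntegrableOn (fun t => x' (F t)) B μ := by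
  have h := (hF.2 B hB).1.2 x'
  rw [← Function.comp_def x', ← Set.indicator_comp_of_zero (map_zero x')] at h
  exact (integrable_indicator_iff hB.1).1 h

theorem apply_pettisIntegral (hF : LocPettisIntegrable μ F) (hB : B ∈ finiteMeasureSets μ)
    (x' : StrongDual ℝ E) : x' (pettisIntegral μ F B) = ∫ t in B, x' (F t) ∂μ := by
  obtain ⟨x, hx⟩ := (hF.2 B hB).2 B hB.1
  refine IsPettisIntegralOn.apply_pettisIntegral (x := x) (fun y' => ?_) x'
  exact (hx y').trans (setIntegral_congr_fun hB.1 fun t ht => by simp [Set.indicator_of_mem ht])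

theorem ae_restrict_eq_zero_of_semivariation_eq_zero (hF : LocPettisIntegrable μ F)
    (hμ : SemiFinite μ) {N : Set Ω} (hN : MeasurableSet N)
    (hN0 : semivariation (finiteMeasureSets μ) (pettisIntegral μ F) N = 0)
    (x' : StrongDual ℝ E) : (fun t => x' (F t)) =ᵐ[μ.restrict N] 0 := by
  have hfinite : ∀ s, MeasurableSet s → μ.restrict N s < ∞ → s ∩ N ∈ finiteMeasureSets μ :=
    fun s hs hsfin => ⟨hs.inter hN, by rwa [Measure.restrict_apply hs] at hsfin⟩
  refine (hμ.restrict hN).ae_eq_zero_of_forall_setIntegral_eq_zero (hF.1 x').restrict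
    (fun s hs hsfin => ?_) (fun s hs hsfin => ?_)
  · rw [IntegrableOn, Measure.restrict_restrict' hN]
    exact hF.integrableOn (hfinite s hs hsfin) x'
  · rw [Measure.restrict_restrict' hN, ← hF.apply_pettisIntegral (hfinite s hs hsfin),
      eq_zero_of_semivariation_eq_zero hN0 (hfinite s hs hsfin) Set.inter_subset_right, map_zero]

end LocPettisIntegrable

end Pettis

theorem stmt15_general (μ : Measure Ω) (hμ : LocallyDetermined μ)
    (F : Ω → X) (hF : LocPettisIntegrable μ F)
    (g h : Ω → ℝ) (gn : ℕ → Ω → ℝ)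
    (N : Set Ω) (hN : MeasurableSet N)
    (hN0 : semivariation (finiteMeasureSets μ) (pettisIntegral μ F) N = 0) :
    ((∀ t ∉ N, g t = h t) →
      ∀ x' : StrongDual ℝ X,
        (fun t => x' (g t • F t)) =ᵐ[μ] fun t => x' (h t • F t)) ∧
    ((∀ t ∉ N, Filter.Tendsto (fun n => gn n t) Filter.atTop (nhds (g t))) →
      ∀ x' : StrongDual ℝ X, ∀ᵐ t ∂μ,
        Filter.Tendsto (fun n => x' (gn n t • F t)) Filter.atTop
          (nhds (x' (g t • F t)))) := by
  have hvanish (x' : StrongDual ℝ X) : ∀ᵐ t ∂μ, t ∈ N → x' (F t) = 0 :=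
    (ae_restrict_iff' hN).1 (hF.ae_restrict_eq_zero_of_semivariation_eq_zero hμ.1 hN hN0 x')
  refine ⟨fun hgh x' => ?_, fun hconv x' => ?_⟩
  · filter_upwards [hvanish x'] with t ht
    by_cases htN : t ∈ N
    · simp [ht htN]
    · rw [hgh t htN]
  · filter_upwards [hvanish x'] with t ht
    simp only [map_smul, smul_eq_mul]
    by_cases htN : t ∈ N
    · simp [ht htN]
    · exact (hconv t htN).mul_const _

/-- if `g = h` `ν_F`-a.e. then `gF = hF` weakly `μ`-a.e.; and
`ν_F`-a.e. convergence `g_n → g` gives `⟨g_n F, x*⟩ → ⟨gF, x*⟩` `μ`-a.e. -/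
theorem stmt15 (μ : Measure Ω) (hμ : LocallyDetermined μ)
    (F : Ω → X) (hF : LocPettisIntegrable μ F)
    (g h : Ω → ℝ) (gn : ℕ → Ω → ℝ) (hg : Measurable g) (hh : Measurable h)
    (N : Set Ω) (hN : MeasurableSet N)
    (hN0 : semivariation (finiteMeasureSets μ) (pettisIntegral μ F) N = 0) :
    ((∀ t ∉ N, g t = h t) →
      ∀ x' : StrongDual ℝ X,
        (fun t => x' (g t • F t)) =ᵐ[μ] fun t => x' (h t • F t)) ∧
    ((∀ t ∉ N, Filter.Tendsto (fun n => gn n t) Filter.atTop (nhds (g t))) →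
      ∀ x' : StrongDual ℝ X, ∀ᵐ t ∂μ,
        Filter.Tendsto (fun n => x' (gn n t • F t)) Filter.atTop
          (nhds (x' (g t • F t)))) :=
  stmt15_general μ hμ F hF g h gn N hN hN0

end
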